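/- arXiv:1605.01716 — 2 statements merged into one kernel-verified Lean document; each statement's English description precedes it below -/
import Mathlib

section
/- Let β_c = √(2 log 2) and let F : (0,∞) → ℝ be defined by F(β) = β²/2 if β ≤ β_c and F(β) = β β_c − log 2 if β > β_c. Then for every m with 0 < m ≤ 1, sup_{β>0} ( F(β) − β² m / 2 ) = (log 2)/m − log 2. -/
/-!
With `c = √(2 log 2)`, so that `log 2 = c² / 2`, the target value is `c² / (2m) - c² / 2`.
Below `c` the objective is `β² (1 - m) / 2 ≤ c² (1 - m) / 2`, which is at most the target because
`m ≤ 1`. Above `c` it is `β c - β² m / 2 - c² / 2`, a concave parabola whose maximum `c² / (2m)`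
sits at `β = c / m ≥ c`; there the supremum is attained.
-/

open Set

/-- The REM free energy `F(β)` with `β_c = c`, written through `log 2 = c² / 2`. -/
noncomputable def remFreeEnergy (c β : ℝ) : ℝ :=
  if β ≤ c then β ^ 2 / 2 else β * c - c ^ 2 / 2

lemma mul_sub_sq_mul_div_two_le (a β : ℝ) {m : ℝ} (hm : 0 < m) :
    β * a - β ^ 2 * m / 2 ≤ a ^ 2 / (2 * m) := by
  rw [le_div_iff₀ (by positivity)]
  nlinarith [sq_nonneg (β * m - a)]

section remFreeEnergy

variable {c m : ℝ}

lemma remFreeEnergy_sub_le (hm0 : 0 < m) (hm1 : m ≤ 1) {β : ℝ} (hβ : 0 ≤ β) :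
    remFreeEnergy c β - β ^ 2 * m / 2 ≤ c ^ 2 / (2 * m) - c ^ 2 / 2 := by
  unfold remFreeEnergy
  split_ifs with hβc
  · have hsq : β ^ 2 ≤ c ^ 2 := pow_le_pow_left₀ hβ hβc 2
    have hgap : c ^ 2 / (2 * m) - c ^ 2 / 2 = c ^ 2 * (1 - m) / (2 * m) := by
      field_simp
    rw [hgap, le_div_iff₀ (by positivity)]
    have h1m : 0 ≤ 1 - m := sub_nonneg.2 hm1
    nlinarith [mul_le_mul_of_nonneg_right hsq h1m, mul_nonneg (mul_nonneg (sq_nonneg β) h1m) h1m]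
  · linarith [mul_sub_sq_mul_div_two_le c β hm0]

lemma remFreeEnergy_div_sub (hc : 0 < c) (hm0 : 0 < m) (hm1 : m ≤ 1) :
    remFreeEnergy c (c / m) - (c / m) ^ 2 * m / 2 = c ^ 2 / (2 * m) - c ^ 2 / 2 := by
  rcases eq_or_lt_of_le hm1 with rfl | hm
  · simp [remFreeEnergy]
  · have hcm : ¬ c / m ≤ c := not_le.2 ((lt_div_iff₀ hm0).2 (by nlinarith))
    rw [remFreeEnergy, if_neg hcm]
    field_simp
    ring

theorem ciSup_remFreeEnergy_sub (hc : 0 < c) (hm0 : 0 < m) (hm1 : m ≤ 1) :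
    ⨆ β : Ioi (0 : ℝ), (remFreeEnergy c β - (β : ℝ) ^ 2 * m / 2)
      = c ^ 2 / (2 * m) - c ^ 2 / 2 := by
  have hle : ∀ β : Ioi (0 : ℝ), remFreeEnergy c β - (β : ℝ) ^ 2 * m / 2
      ≤ c ^ 2 / (2 * m) - c ^ 2 / 2 := fun β ↦ remFreeEnergy_sub_le hm0 hm1 (le_of_lt β.2)
  refine le_antisymm (ciSup_le hle) ?_
  exact le_ciSup_of_le ⟨_, forall_mem_range.2 hle⟩ ⟨c / m, div_pos hc hm0⟩
    (remFreeEnergy_div_sub hc hm0 hm1).ge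

end remFreeEnergy

/-- For the limiting free energy `F` of the random energy model, the Legendre-type
supremum `sup_{β>0} (F(β) - β² m / 2)` equals `(log 2)/m - log 2` for every `0 < m ≤ 1`. -/
theorem REM_squared_free_energy
    (F : ℝ → ℝ)
    (hF1 : ∀ β : ℝ, 0 < β → β ≤ Real.sqrt (2 * Real.log 2) → F β = β ^ 2 / 2)
    (hF2 : ∀ β : ℝ, Real.sqrt (2 * Real.log 2) < β →
      F β = β * Real.sqrt (2 * Real.log 2) - Real.log 2)
    (m : ℝ) (hm0 : 0 < m) (hm1 : m ≤ 1) :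
    (⨆ β : Set.Ioi (0 : ℝ), (F β - (β : ℝ) ^ 2 * m / 2)) = Real.log 2 / m - Real.log 2 := by
  set c := Real.sqrt (2 * Real.log 2)
  have hc2 : c ^ 2 = 2 * Real.log 2 := Real.sq_sqrt (by positivity)
  have hc : 0 < c := Real.sqrt_pos.2 (by positivity)
  have hF : ∀ β : Ioi (0 : ℝ), F β = remFreeEnergy c β := by
    rintro ⟨β, hβ⟩
    unfold remFreeEnergy
    split_ifs with hβc
    · exact hF1 β hβ hβc
    · rw [hF2 β (not_le.1 hβc), hc2]
      ring
  simp_rw [hF, ciSup_remFreeEnergy_sub hc hm0 hm1, hc2]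
  field_simp
end

section
/- Let U be a function defined on sequences m = (m_p)_{p≥1} of positive reals, taking values in ℝ ∪ {∞}, which is nondecreasing in each coordinate and convex. For β = (β_p)_{p≥1} with β_p > 0 for all p and Σ β_p² < ∞, define G(β) = inf_{t} ( U((β_p²/t_p)_{p≥1}) + (1/2) Σ_{p≥1} t_p ), the infimum over all sequences t = (t_p)_{p≥1} of positive reals. Then G is convex: for every 0 < c < 1 and every such β, β', G((1−c)β + cβ') ≤ (1−c)G(β) + cG(β'). -/
open scoped ENNReal

/-!
The map `(b, s) ↦ b² / s` is jointly convex on `ℝ × (0, ∞)` (a two-term Cauchy–Schwarz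
inequality), so by monotonicity and convexity of `U` and linearity of `t ↦ ½ ∑ t`, the objective
`(β, t) ↦ U (β² / t) + ½ ∑ t` is jointly convex, and a partial infimum of a jointly convex
function is convex. The only obstruction is the `EReal` convention `⊥ + ⊤ = ⊥`. It is harmless:
if `U m = ⊥` for some `m`, then every infimum is `⊥` (take `t = β² / m`); otherwise no infimum
is `⊥`, since `U (a / 2) ≤ ½ U a + ½ U b` with `U b` arbitrarily negative would force
`U (a / 2) = ⊥`.
-/

theorem sq_add_div_add_le (a b : ℝ) {s t : ℝ} (hs : 0 < s) (ht : 0 < t) :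
    (a + b) ^ 2 / (s + t) ≤ a ^ 2 / s + b ^ 2 / t := by
  simpa [Fin.sum_univ_two] using
    Finset.sq_sum_div_le_sum_sq_div Finset.univ ![a, b] (g := ![s, t])
      (by simp [Fin.forall_fin_two, hs, ht])

theorem sq_convexComb_div_le (a b : ℝ) {u v s t : ℝ} (hu : 0 < u) (hv : 0 < v)
    (hs : 0 < s) (ht : 0 < t) :
    (u * a + v * b) ^ 2 / (u * s + v * t) ≤ u * (a ^ 2 / s) + v * (b ^ 2 / t) := by
  convert sq_add_div_add_le (u * a) (v * b) (mul_pos hu hs) (mul_pos hv ht) using 2 <;>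
    field_simp

namespace EReal

theorem coe_mul_iInf {ι : Sort*} {u : ℝ} (hu : 0 < u) (f : ι → EReal) :
    (u : EReal) * ⨅ i, f i = ⨅ i, (u : EReal) * f i := by
  have hu' : (0 : EReal) < u := EReal.coe_pos.2 hu
  refine le_antisymm (le_iInf fun i => mul_le_mul_of_nonneg_left (iInf_le f i) hu'.le) ?_
  refine (div_le_iff_le_mul hu' (coe_ne_top u)).1 (le_iInf fun i => ?_)
  exact (div_le_iff_le_mul hu' (coe_ne_top u)).2 (iInf_le _ i)

theorem le_iInf_add_iInf {ι κ : Sort*} {f : ι → EReal} {g : κ → EReal} {z : EReal}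
    (hf : ⨅ i, f i ≠ ⊥) (hg : ⨅ j, g j ≠ ⊥) (h : ∀ i j, z ≤ f i + g j) :
    z ≤ (⨅ i, f i) + ⨅ j, g j := by
  refine le_add_of_forall_gt (.inl hf) (.inr hg) fun a ha b hb => ?_
  obtain ⟨i, hi⟩ := iInf_lt_iff.1 ha
  obtain ⟨j, hj⟩ := iInf_lt_iff.1 hb
  exact (h i j).trans (add_le_add hi.le hj.le)

end EReal

section InfRepresentation

variable {ι : Type*}

-- `ConvexOn` needs an `ℝ`-action on the codomain, which `EReal` lacks.
def ConvexOnPositive (U : (ι → ℝ) → EReal) : Prop :=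
  ∀ m m' : ι → ℝ, (∀ p, 0 < m p) → (∀ p, 0 < m' p) → ∀ c : ℝ, 0 < c → c < 1 →
    U (fun p => (1 - c) * m p + c * m' p) ≤ ((1 - c : ℝ) : EReal) * U m + (c : ℝ) * U m'

noncomputable def infRepObjective (U : (ι → ℝ) → EReal) (β t : ι → ℝ) : EReal :=
  U (fun p => β p ^ 2 / t p) + (((∑' p, ENNReal.ofReal (t p)) / 2 : ℝ≥0∞) : EReal)

theorem coe_tsum_ofReal_convexComb_div_two {u v : ℝ} (hu : 0 ≤ u) (hv : 0 ≤ v)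
    {t t' : ι → ℝ} (ht : ∀ p, 0 ≤ t p) (ht' : ∀ p, 0 ≤ t' p) :
    (((∑' p, ENNReal.ofReal (u * t p + v * t' p)) / 2 : ℝ≥0∞) : EReal) =
      u * (((∑' p, ENNReal.ofReal (t p)) / 2 : ℝ≥0∞) : EReal) +
        v * (((∑' p, ENNReal.ofReal (t' p)) / 2 : ℝ≥0∞) : EReal) := by
  have hsplit : ∀ p, ENNReal.ofReal (u * t p + v * t' p) =
      ENNReal.ofReal u * ENNReal.ofReal (t p) + ENNReal.ofReal v * ENNReal.ofReal (t' p) := by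
    intro p
    rw [← ENNReal.ofReal_mul hu, ← ENNReal.ofReal_mul hv,
      ← ENNReal.ofReal_add (mul_nonneg hu (ht p)) (mul_nonneg hv (ht' p))]
  rw [tsum_congr hsplit, ENNReal.tsum_add, ENNReal.tsum_mul_left, ENNReal.tsum_mul_left,
    ENNReal.add_div]
  simp only [div_eq_mul_inv, mul_assoc, EReal.coe_ennreal_add, EReal.coe_ennreal_mul,
    EReal.coe_ennreal_ofReal, max_eq_left hu, max_eq_left hv]

variable {U : (ι → ℝ) → EReal}

theorem infRepObjective_convexComb_le (hUmono : MonotoneOn U {m | ∀ p, 0 < m p})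
    (hUconv : ConvexOnPositive U) {c : ℝ} (hc : 0 < c) (hc1 : c < 1) {β β' t t' : ι → ℝ}
    (hβ : ∀ p, 0 < β p) (hβ' : ∀ p, 0 < β' p) (ht : ∀ p, 0 < t p) (ht' : ∀ p, 0 < t' p) :
    infRepObjective U (fun p => (1 - c) * β p + c * β' p) (fun p => (1 - c) * t p + c * t' p) ≤
      ((1 - c : ℝ) : EReal) * infRepObjective U β t + (c : ℝ) * infRepObjective U β' t' := by
  have h1c : 0 < 1 - c := by linarith
  have hm : ∀ p, 0 < β p ^ 2 / t p := fun p => div_pos (pow_pos (hβ p) 2) (ht p)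
  have hm' : ∀ p, 0 < β' p ^ 2 / t' p := fun p => div_pos (pow_pos (hβ' p) 2) (ht' p)
  have hU : U (fun p => ((1 - c) * β p + c * β' p) ^ 2 / ((1 - c) * t p + c * t' p)) ≤
      ((1 - c : ℝ) : EReal) * U (fun p => β p ^ 2 / t p) +
        (c : ℝ) * U (fun p => β' p ^ 2 / t' p) :=
    (hUmono (fun p => by have := hβ p; have := hβ' p; have := ht p; have := ht' p; positivity)
      (fun p => by have := hm p; have := hm' p; positivity)
      (fun p => sq_convexComb_div_le _ _ h1c hc (ht p) (ht' p))).trans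
      (hUconv _ _ hm hm' c hc hc1)
  rw [infRepObjective, infRepObjective, infRepObjective,
    coe_tsum_ofReal_convexComb_div_two h1c.le hc.le (fun p => (ht p).le) (fun p => (ht' p).le),
    EReal.left_distrib_of_nonneg_of_ne_top (EReal.coe_nonneg.2 h1c.le) (EReal.coe_ne_top _),
    EReal.left_distrib_of_nonneg_of_ne_top (EReal.coe_nonneg.2 hc.le) (EReal.coe_ne_top _),
    add_add_add_comm]
  exact add_le_add_left hU _

theorem iInf_infRepObjective_eq_bot {β m : ι → ℝ} (hβ : ∀ p, 0 < β p) (hm : ∀ p, 0 < m p)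
    (hUm : U m = ⊥) : ⨅ t ∈ {t : ι → ℝ | ∀ p, 0 < t p}, infRepObjective U β t = ⊥ := by
  refine eq_bot_iff.2 ((iInf₂_le (fun p => β p ^ 2 / m p)
    fun p => div_pos (pow_pos (hβ p) 2) (hm p)).trans ?_)
  have hinv : (fun p => β p ^ 2 / (β p ^ 2 / m p)) = m :=
    funext fun p => div_div_cancel₀ (pow_pos (hβ p) 2).ne'
  rw [infRepObjective, hinv, hUm, EReal.bot_add]

theorem exists_eq_bot_of_forall_exists_le (hUmono : MonotoneOn U {m | ∀ p, 0 < m p})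
    (hUconv : ConvexOnPositive U) (h : ∀ y : ℝ, ∃ m : ι → ℝ, (∀ p, 0 < m p) ∧ U m ≤ y) :
    ∃ m : ι → ℝ, (∀ p, 0 < m p) ∧ U m = ⊥ := by
  obtain ⟨a, ha, hUa⟩ := h 0
  refine ⟨fun p => a p / 2, fun p => half_pos (ha p), (EReal.eq_bot_iff_forall_lt _).2 fun y => ?_⟩
  obtain ⟨b, hb, hUb⟩ := h (2 * (y - 1))
  calc U (fun p => a p / 2)
      ≤ U (fun p => (1 - 1 / 2) * a p + 1 / 2 * b p) :=
        hUmono (fun p => half_pos (ha p)) (fun p => by have := ha p; have := hb p; positivity)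
          (fun p => by linarith [hb p])
    _ ≤ ((1 - 1 / 2 : ℝ) : EReal) * U a + ((1 / 2 : ℝ) : EReal) * U b :=
        hUconv a b ha hb (1 / 2) (by norm_num) (by norm_num)
    _ ≤ ((1 - 1 / 2 : ℝ) : EReal) * (0 : ℝ) + ((1 / 2 : ℝ) : EReal) * (2 * (y - 1) : ℝ) := by
        gcongr
    _ < y := by
        rw [← EReal.coe_mul, ← EReal.coe_mul, ← EReal.coe_add, EReal.coe_lt_coe_iff]
        linarith

theorem iInf_infRepObjective_ne_bot (hUmono : MonotoneOn U {m | ∀ p, 0 < m p})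
    (hUconv : ConvexOnPositive U) (hU : ∀ m : ι → ℝ, (∀ p, 0 < m p) → U m ≠ ⊥)
    {β : ι → ℝ} (hβ : ∀ p, 0 < β p) :
    ⨅ t ∈ {t : ι → ℝ | ∀ p, 0 < t p}, infRepObjective U β t ≠ ⊥ := by
  intro h
  obtain ⟨m, hm, hUm⟩ := exists_eq_bot_of_forall_exists_le hUmono hUconv fun y => by
    have hlt : ⨅ t ∈ {t : ι → ℝ | ∀ p, 0 < t p}, infRepObjective U β t < y :=
      h ▸ EReal.bot_lt_coe y
    obtain ⟨t, ht, hlt⟩ := by simpa only [iInf_lt_iff, exists_prop] using hlt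
    exact ⟨_, fun p => div_pos (pow_pos (hβ p) 2) (ht p),
      (le_add_of_nonneg_right (EReal.coe_ennreal_nonneg _)).trans hlt.le⟩
  exact hU m hm hUm

theorem iInf_infRepObjective_convexComb_le (hUmono : MonotoneOn U {m | ∀ p, 0 < m p})
    (hUconv : ConvexOnPositive U) (hU : ∀ m : ι → ℝ, (∀ p, 0 < m p) → U m ≠ ⊥)
    {c : ℝ} (hc : 0 < c) (hc1 : c < 1) {β β' : ι → ℝ}
    (hβ : ∀ p, 0 < β p) (hβ' : ∀ p, 0 < β' p) :
    ⨅ t ∈ {t : ι → ℝ | ∀ p, 0 < t p}, infRepObjective U (fun p => (1 - c) * β p + c * β' p) t ≤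
      ((1 - c : ℝ) : EReal) * (⨅ t ∈ {t : ι → ℝ | ∀ p, 0 < t p}, infRepObjective U β t) +
        (c : ℝ) * ⨅ t ∈ {t : ι → ℝ | ∀ p, 0 < t p}, infRepObjective U β' t := by
  have h1c : 0 < 1 - c := by linarith
  have hmul_ne_bot : ∀ {u : ℝ} {γ : ι → ℝ}, 0 < u → (∀ p, 0 < γ p) →
      ⨅ t : {t : ι → ℝ | ∀ p, 0 < t p}, (u : EReal) * infRepObjective U γ t ≠ ⊥ := by
    intro u γ hu hγ
    rw [← EReal.coe_mul_iInf hu, iInf_subtype'', EReal.mul_ne_bot]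
    exact ⟨.inl (EReal.coe_ne_bot u), .inr (iInf_infRepObjective_ne_bot hUmono hUconv hU hγ),
      .inl (EReal.coe_ne_top u), .inl (EReal.coe_nonneg.2 hu.le)⟩
  simp only [← iInf_subtype'', EReal.coe_mul_iInf h1c, EReal.coe_mul_iInf hc]
  refine EReal.le_iInf_add_iInf (hmul_ne_bot h1c hβ) (hmul_ne_bot hc hβ') fun t t' => ?_
  exact (iInf_le _ ⟨fun p => (1 - c) * t.1 p + c * t'.1 p,
    fun p => by have := t.2 p; have := t'.2 p; positivity⟩).trans
    (infRepObjective_convexComb_le hUmono hUconv hc hc1 hβ hβ' t.2 t'.2)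

end InfRepresentation

/-- General convexity mechanism: if `U` is nondecreasing in each coordinate and convex
on positive sequences, then `G(β) = inf_t ( U(β²/t) + (1/2) Σ t_p )` is convex in `β`
on the set of positive square-summable sequences. -/
theorem convexity_of_inf_representation
    (U : (ℕ+ → ℝ) → EReal)
    (hUmono : ∀ m m' : ℕ+ → ℝ, (∀ p, 0 < m p) → (∀ p, 0 < m' p) →
      (∀ p, m p ≤ m' p) → U m ≤ U m')
    (hUconv : ∀ m m' : ℕ+ → ℝ, (∀ p, 0 < m p) → (∀ p, 0 < m' p) →
      ∀ c : ℝ, 0 < c → c < 1 →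
      U (fun p => (1 - c) * m p + c * m' p) ≤
        (((1 - c : ℝ) : EReal) * U m + ((c : ℝ) : EReal) * U m'))
    (G : (ℕ+ → ℝ) → EReal)
    (hG : ∀ β : ℕ+ → ℝ, G β =
      ⨅ t ∈ {t : ℕ+ → ℝ | ∀ p, 0 < t p},
        (U (fun p => (β p) ^ 2 / t p) +
          ((((∑' p : ℕ+, ENNReal.ofReal (t p)) / 2 : ℝ≥0∞) : EReal)))) :
    ∀ c : ℝ, 0 < c → c < 1 →
    ∀ β β' : ℕ+ → ℝ,
      ((∀ p, 0 < β p) ∧ Summable fun p => (β p) ^ 2) →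
      ((∀ p, 0 < β' p) ∧ Summable fun p => (β' p) ^ 2) →
      G (fun p => (1 - c) * β p + c * β' p) ≤
        (((1 - c : ℝ) : EReal) * G β + ((c : ℝ) : EReal) * G β') := by
  intro c hc hc1 β β' ⟨hβ, _⟩ ⟨hβ', _⟩
  have hmono : MonotoneOn U {m | ∀ p, 0 < m p} := fun m hm m' hm' => hUmono m m' hm hm'
  have hG' : ∀ β, G β = ⨅ t ∈ {t : ℕ+ → ℝ | ∀ p, 0 < t p}, infRepObjective U β t := hG
  rw [hG', hG', hG']
  by_cases hbot : ∃ m : ℕ+ → ℝ, (∀ p, 0 < m p) ∧ U m = ⊥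
  · obtain ⟨m, hm, hUm⟩ := hbot
    rw [iInf_infRepObjective_eq_bot (fun p => by have := hβ p; have := hβ' p; positivity) hm hUm]
    exact bot_le
  · push Not at hbot
    exact iInf_infRepObjective_convexComb_le hmono hUconv hbot hc hc1 hβ hβ'
end
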